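/- (Key algebraic computation in the proof of Theorem 2.23) Let S be a 4-dimensional linear subspace of ℝ⁸, let π denote the orthogonal projection of ℝ⁸ onto S^⊥, and let π^T = id − π. Fix U, V ∈ S. Define N(X;Y,Z,T) = (⟨U,Y⟩⟨V,Z⟩ − ⟨U,Z⟩⟨V,Y⟩)⟨P(U,V,πX), T⟩ + (⟨U,Z⟩⟨V,T⟩ − ⟨U,T⟩⟨V,Z⟩)⟨P(U,V,πX), Y⟩ + (⟨U,T⟩⟨V,Y⟩ − ⟨U,Y⟩⟨V,T⟩)⟨P(U,V,πX), Z⟩, and the quadrilinear map D(X,Y,Z,T) = N(X;Y,Z,T) − N(Y;X,Z,T) + N(Z;X,Y,T) − N(T;X,Y,Z). Then for every orthonormal basis {g₁,g₂,g₃,g₄} of S: (1/24) Σ_{m,n,p=1}^8 D( π(P(e_m,e_n,e_p)) − π^T(P(e_m,e_n,e_p)), e_m, e_n, e_p ) = (1/2) Σ_{a=1}^4 ‖π(P(U,V,g_a))‖². -/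

import Mathlib

open scoped RealInnerProductSpace

noncomputable section

abbrev E8 : Type := EuclideanSpace ℝ (Fin 8)

/-- The standard orthonormal basis vectors of ℝ⁸. -/
def e8 (i : Fin 8) : E8 := EuclideanSpace.single i 1

/-- Kronecker delta. -/
def kd8 (i j : Fin 8) : ℝ := if i = j then 1 else 0

/-- `e^{abcd}(e_i, e_j, e_k, e_l)` : component of a wedge of four dual basis covectors. -/
def quad8 (a b c d i j k l : Fin 8) : ℝ :=
  Matrix.det !![kd8 a i, kd8 a j, kd8 a k, kd8 a l;
                kd8 b i, kd8 b j, kd8 b k, kd8 b l;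
                kd8 c i, kd8 c j, kd8 c k, kd8 c l;
                kd8 d i, kd8 d j, kd8 d k, kd8 d l]

/-- Components `Φ_{ijkl}` of the standard Spin(7) 4-form
`Φ = e¹²³⁴ + (e¹² − e³⁴)∧(e⁵⁶ − e⁷⁸) + (e¹³ − e⁴²)∧(e⁵⁷ − e⁸⁶)
   + (e¹⁴ − e²³)∧(e⁵⁸ − e⁶⁷) + e⁵⁶⁷⁸` (indices shifted to be 0-based). -/
def PhiC (i j k l : Fin 8) : ℝ :=
  quad8 0 1 2 3 i j k l
  + quad8 0 1 4 5 i j k l - quad8 0 1 6 7 i j k l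
  - quad8 2 3 4 5 i j k l + quad8 2 3 6 7 i j k l
  + quad8 0 2 4 6 i j k l - quad8 0 2 7 5 i j k l
  - quad8 3 1 4 6 i j k l + quad8 3 1 7 5 i j k l
  + quad8 0 3 4 7 i j k l - quad8 0 3 5 6 i j k l
  - quad8 1 2 4 7 i j k l + quad8 1 2 5 6 i j k l
  + quad8 4 5 6 7 i j k l

/-- The standard Spin(7) 4-form evaluated on arbitrary vectors. -/
def Phi8 (x y z w : E8) : ℝ :=
  ∑ i, ∑ j, ∑ k, ∑ l, x i * y j * z k * w l * PhiC i j k l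

/-- The triple cross product on ℝ⁸, characterized by `⟨P(x,y,z), w⟩ = Φ(x,y,z,w)`. -/
def P8 (x y z : E8) : E8 := (WithLp.equiv 2 (Fin 8 → ℝ)).symm fun l => Phi8 x y z (e8 l)

/-- Orthogonal projection `π` of ℝ⁸ onto `Sᗮ`. -/
def projPerp (S : Submodule ℝ E8) (x : E8) : E8 := (Sᗮ.orthogonalProjection x : E8)

/-- Tangential projection `π^T = id − π`. -/
def projTan (S : Submodule ℝ E8) (x : E8) : E8 := x - projPerp S x

/-- The map `N(X; Y,Z,T)` built from `U, V` and the projection `pr = π`. -/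
def Nform (U V : E8) (pr : E8 → E8) (X Y Z T : E8) : ℝ :=
  (⟪U, Y⟫ * ⟪V, Z⟫ - ⟪U, Z⟫ * ⟪V, Y⟫) * ⟪P8 U V (pr X), T⟫
  + (⟪U, Z⟫ * ⟪V, T⟫ - ⟪U, T⟫ * ⟪V, Z⟫) * ⟪P8 U V (pr X), Y⟫
  + (⟪U, T⟫ * ⟪V, Y⟫ - ⟪U, Y⟫ * ⟪V, T⟫) * ⟪P8 U V (pr X), Z⟫

/-- The quadrilinear map `D(X,Y,Z,T) = N(X;Y,Z,T) − N(Y;X,Z,T) + N(Z;X,Y,T) − N(T;X,Y,Z)`. -/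
def Dform (U V : E8) (pr : E8 → E8) (X Y Z T : E8) : ℝ :=
  Nform U V pr X Y Z T - Nform U V pr Y X Z T
  + Nform U V pr Z X Y T - Nform U V pr T X Y Z


/-!
Write `A = P(U, V, ·)`, skew-adjoint because `Φ` is alternating, `π` for the projection onto `Sᗮ`
and `R = π − πᵀ` for the reflection in `Sᗮ`, so that `R U = −U`, `R V = −V` and `π R = π`.
Nothing about `Φ` beyond being an alternating 4-form is used. Contracting the summation indices
pairwise against `Φ` collapses every triple sum to a trace: the `N(X; ·)` term of `D` sums to
`6 tr(AπA)`, and by the antisymmetry of `P` each of the other three terms sums to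
`−(6 tr(A²π) − 4 tr(AπAπ))`. On the other side `Σₐ ‖π A gₐ‖² = −tr(AπA πᵀ) = tr(AπAπ) − tr(AπA)`,
and `tr(A²π) = tr(AπA)` closes the identity.
-/

open Finset

section TripleSums

variable {ι M : Type*} [Fintype ι] [AddCommMonoid M]

lemma sum_sum_sum_rotate (f : ι → ι → ι → M) :
    ∑ i, ∑ j, ∑ k, f k i j = ∑ i, ∑ j, ∑ k, f i j k := by
  simp_rw [sum_comm (γ := ι) (s := univ) (t := univ) (f := fun j k => f k _ j)]
  exact sum_comm

lemma sum_sum_sum_swap_outer (f : ι → ι → ι → M) :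
    ∑ i, ∑ j, ∑ k, f k j i = ∑ i, ∑ j, ∑ k, f i j k := by
  rw [sum_comm]
  simp_rw [sum_comm (γ := ι) (s := univ) (t := univ) (f := fun i k => f k _ i)]
  exact sum_comm

end TripleSums

lemma det_submatrix_swap {n R : Type*} [DecidableEq n] [Fintype n] [CommRing R]
    (M : Matrix n n R) {r s : n} (hrs : r ≠ s) :
    (M.submatrix _root_.id (Equiv.swap r s)).det = -M.det := by
  rw [Matrix.det_permute', Equiv.Perm.sign_swap hrs, Units.val_neg, Units.val_one, Int.cast_neg,
    Int.cast_one, neg_one_mul]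

section Projection

variable {E : Type*} [NormedAddCommGroup E] [InnerProductSpace ℝ E] (K : Submodule ℝ E)
  [K.HasOrthogonalProjection]

lemma Submodule.inner_reflection_left_eq_right (x y : E) :
    ⟪K.reflection x, y⟫ = ⟪x, K.reflection y⟫ := by
  rw [← K.reflection.inner_map_map x (K.reflection y), Submodule.reflection_reflection]

lemma Submodule.starProjection_starProjection (x : E) :
    K.starProjection (K.starProjection x) = K.starProjection x :=
  Submodule.starProjection_eq_self_iff.mpr (K.starProjection_apply_mem x)

lemma Submodule.starProjection_reflection (x : E) :
    K.starProjection (K.reflection x) = K.starProjection x := by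
  rw [Submodule.reflection_apply, map_sub, map_nsmul, K.starProjection_starProjection, two_nsmul,
    add_sub_cancel_right]

lemma Submodule.norm_starProjection_sq (x : E) :
    ‖K.starProjection x‖ ^ 2 = ⟪x, K.starProjection x⟫ := by
  rw [← real_inner_self_eq_norm_sq, Submodule.inner_starProjection_left_eq_right,
    K.starProjection_starProjection]

lemma Orthonormal.sum_inner_apply_eq_trace [FiniteDimensional ℝ E] {ι : Type*} [Fintype ι]
    {g : ι → E} (hg : Orthonormal ℝ g) (T : E →ₗ[ℝ] E) :
    ∑ a, ⟪g a, T (g a)⟫ =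
      LinearMap.trace ℝ E (T ∘ₗ (Submodule.span ℝ (Set.range g)).starProjection.toLinearMap) := by
  set K := Submodule.span ℝ (Set.range g)
  let b : OrthonormalBasis ι ℝ K :=
    (Module.Basis.span hg.linearIndependent).toOrthonormalBasis <| by
      rw [show ⇑(Module.Basis.span hg.linearIndependent) = _ from
        funext (Module.Basis.span_apply _)]
      exact orthonormal_span hg
  have hb (a : ι) : (b a : E) = g a := by simp [b, Module.Basis.span_apply]
  have hK : K.starProjection.toLinearMap =
      K.subtype ∘ₗ K.orthogonalProjectionOnto.toLinearMap := rfl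
  rw [hK, ← LinearMap.comp_assoc, LinearMap.trace_comp_comm', LinearMap.trace_eq_sum_inner _ b]
  simp only [LinearMap.comp_apply, ContinuousLinearMap.coe_coe,
    Submodule.inner_orthogonalProjectionOnto_eq_of_mem_left, Submodule.subtype_apply, hb]

end Projection

lemma e8_eq_basisFun : e8 = ⇑(EuclideanSpace.basisFun (Fin 8) ℝ) := by
  funext i; simp [e8]

lemma trace_eq_sum_inner_e8 (T : E8 →ₗ[ℝ] E8) :
    LinearMap.trace ℝ E8 T = ∑ m, ⟪e8 m, T (e8 m)⟫ := by
  rw [LinearMap.trace_eq_sum_inner T (EuclideanSpace.basisFun (Fin 8) ℝ), e8_eq_basisFun]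

lemma sum_inner_e8_mul_inner (x y : E8) : ∑ m, ⟪x, e8 m⟫ * ⟪e8 m, y⟫ = ⟪x, y⟫ := by
  rw [e8_eq_basisFun, OrthonormalBasis.sum_inner_mul_inner]

lemma Phi8_e8_right (x y z : E8) (l : Fin 8) :
    Phi8 x y z (e8 l) = ∑ i, ∑ j, ∑ k, x i * y j * z k * PhiC i j k l := by
  simp [Phi8, e8]

lemma inner_P8 (x y z w : E8) : ⟪P8 x y z, w⟫ = Phi8 x y z w := by
  simp only [PiLp.inner_apply, RCLike.inner_apply, conj_trivial, P8, WithLp.equiv_symm_apply,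
    Phi8_e8_right, mul_sum]
  unfold Phi8
  rw [sum_comm]; refine sum_congr rfl fun i _ => ?_
  rw [sum_comm]; refine sum_congr rfl fun j _ => ?_
  rw [sum_comm]; refine sum_congr rfl fun k _ => ?_
  exact sum_congr rfl fun l _ => by ring

lemma quad8_eq_det (a b c d i j k l : Fin 8) :
    quad8 a b c d i j k l =
      (Matrix.of fun r s => kd8 (![a, b, c, d] r) (![i, j, k, l] s)).det := by
  unfold quad8; congr 1; ext r s; fin_cases r <;> fin_cases s <;> rfl

lemma quad8_swap12 (a b c d i j k l : Fin 8) :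
    quad8 a b c d j i k l = -quad8 a b c d i j k l := by
  rw [quad8_eq_det, quad8_eq_det, ← det_submatrix_swap _ (show (0 : Fin 4) ≠ 1 by decide)]
  congr 1; ext p q; fin_cases q <;> simp [Equiv.swap_apply_of_ne_of_ne]

lemma quad8_swap23 (a b c d i j k l : Fin 8) :
    quad8 a b c d i k j l = -quad8 a b c d i j k l := by
  rw [quad8_eq_det, quad8_eq_det, ← det_submatrix_swap _ (show (1 : Fin 4) ≠ 2 by decide)]
  congr 1; ext p q; fin_cases q <;> simp [Equiv.swap_apply_of_ne_of_ne]

lemma quad8_swap34 (a b c d i j k l : Fin 8) :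
    quad8 a b c d i j l k = -quad8 a b c d i j k l := by
  rw [quad8_eq_det, quad8_eq_det, ← det_submatrix_swap _ (show (2 : Fin 4) ≠ 3 by decide)]
  congr 1; ext p q; fin_cases q <;> simp [Equiv.swap_apply_of_ne_of_ne]

lemma PhiC_swap12 (i j k l : Fin 8) : PhiC j i k l = -PhiC i j k l := by
  simp only [PhiC, quad8_swap12 _ _ _ _ i j k l]; ring

lemma PhiC_swap23 (i j k l : Fin 8) : PhiC i k j l = -PhiC i j k l := by
  simp only [PhiC, quad8_swap23 _ _ _ _ i j k l]; ring

lemma PhiC_swap34 (i j k l : Fin 8) : PhiC i j l k = -PhiC i j k l := by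
  simp only [PhiC, quad8_swap34 _ _ _ _ i j k l]; ring

lemma Phi8_swap12 (x y z w : E8) : Phi8 y x z w = -Phi8 x y z w := by
  unfold Phi8
  rw [sum_comm]
  simp only [← sum_neg_distrib]
  refine sum_congr rfl fun i _ => sum_congr rfl fun j _ => sum_congr rfl fun k _ =>
    sum_congr rfl fun l _ => ?_
  rw [PhiC_swap12]; ring

lemma Phi8_swap23 (x y z w : E8) : Phi8 x z y w = -Phi8 x y z w := by
  unfold Phi8
  simp only [← sum_neg_distrib]
  refine sum_congr rfl fun i _ => ?_
  rw [sum_comm]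
  refine sum_congr rfl fun j _ => sum_congr rfl fun k _ => sum_congr rfl fun l _ => ?_
  rw [PhiC_swap23]; ring

lemma Phi8_swap34 (x y z w : E8) : Phi8 x y w z = -Phi8 x y z w := by
  unfold Phi8
  simp only [← sum_neg_distrib]
  refine sum_congr rfl fun i _ => sum_congr rfl fun j _ => ?_
  rw [sum_comm]
  refine sum_congr rfl fun k _ => sum_congr rfl fun l _ => ?_
  rw [PhiC_swap34]; ring

lemma Phi8_rotate (x y z w : E8) : Phi8 y z x w = Phi8 x y z w := by
  rw [Phi8_swap23, Phi8_swap12, neg_neg]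

lemma Phi8_swap14 (x y z w : E8) : Phi8 w y z x = -Phi8 x y z w := by
  rw [← Phi8_rotate, Phi8_swap34, Phi8_rotate, Phi8_swap23, Phi8_rotate, Phi8_swap34, neg_neg]

lemma Phi8_swap24 (x y z w : E8) : Phi8 x w z y = -Phi8 x y z w := by
  rw [← Phi8_rotate, Phi8_swap14, Phi8_rotate]

lemma sum_inner_mul_Phi8_fourth (a b c x : E8) :
    ∑ l, ⟪x, e8 l⟫ * Phi8 a b c (e8 l) = Phi8 a b c x := by
  simp only [← inner_P8, real_inner_comm (e8 _) (P8 a b c)]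
  rw [sum_inner_e8_mul_inner, real_inner_comm]

lemma sum_sum_inner_mul_Phi8 (a x y b : E8) :
    ∑ n, ∑ p, ⟪x, e8 n⟫ * ⟪y, e8 p⟫ * Phi8 a (e8 n) (e8 p) b = Phi8 a x y b := by
  have third (n : Fin 8) : ∑ p, ⟪y, e8 p⟫ * Phi8 a (e8 n) (e8 p) b = Phi8 a (e8 n) y b := by
    simp only [Phi8_swap34 a (e8 n) b, mul_neg, sum_neg_distrib, sum_inner_mul_Phi8_fourth]
  simp only [mul_assoc, ← mul_sum, third, Phi8_swap24 a b y, mul_neg, sum_neg_distrib,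
    sum_inner_mul_Phi8_fourth]

lemma sum_sum_wedge_mul_Phi8 (U V a b : E8) :
    ∑ n, ∑ p, (⟪U, e8 n⟫ * ⟪V, e8 p⟫ - ⟪U, e8 p⟫ * ⟪V, e8 n⟫) * Phi8 a (e8 n) (e8 p) b
      = 2 * Phi8 a U V b := by
  have hVU := sum_sum_inner_mul_Phi8 a V U b
  simp only [mul_comm ⟪V, e8 _⟫ ⟪U, e8 _⟫] at hVU
  simp only [sub_mul, sum_sub_distrib, sum_sum_inner_mul_Phi8, hVU, Phi8_swap23 a V U]
  ring

lemma inner_P8_eq_neg_inner (x y z w : E8) : ⟪P8 x y z, w⟫ = -⟪z, P8 x y w⟫ := by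
  rw [inner_P8, real_inner_comm, inner_P8, Phi8_swap34]

lemma P8_swap12 (x y z : E8) : P8 y x z = -P8 x y z :=
  ext_inner_right ℝ fun w => by rw [inner_neg_left, inner_P8, inner_P8, Phi8_swap12]

lemma P8_swap13 (x y z : E8) : P8 z y x = -P8 x y z :=
  ext_inner_right ℝ fun w => by
    rw [inner_neg_left, inner_P8, inner_P8, ← Phi8_rotate, Phi8_swap12, Phi8_rotate]

def P8L (U V : E8) : E8 →ₗ[ℝ] E8 where
  toFun := P8 U V
  map_add' z z' := ext_inner_right ℝ fun w => by
    simp only [inner_add_left, inner_P8_eq_neg_inner U V _ w]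
    ring
  map_smul' c z := ext_inner_right ℝ fun w => by
    simp only [inner_smul_left, inner_P8_eq_neg_inner U V _ w, RingHom.id_apply, conj_trivial]
    ring

@[simp]
lemma P8L_apply (U V z : E8) : P8L U V z = P8 U V z := rfl

def projPerpL (S : Submodule ℝ E8) : E8 →ₗ[ℝ] E8 := Sᗮ.starProjection.toLinearMap

@[simp]
lemma projPerpL_apply (S : Submodule ℝ E8) (x : E8) : projPerpL S x = projPerp S x := rfl

lemma projPerp_eq_starProjection (S : Submodule ℝ E8) (x : E8) :
    projPerp S x = Sᗮ.starProjection x := rfl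

lemma projPerp_sub_projTan (S : Submodule ℝ E8) (x : E8) :
    projPerp S x - projTan S x = Sᗮ.reflection x := by
  rw [projTan, Submodule.reflection_apply, two_nsmul, projPerp_eq_starProjection]
  abel

lemma sum_Dform_eq_of_antisymm (U V : E8) (pr : E8 → E8) {X : Fin 8 → Fin 8 → Fin 8 → E8}
    (hX12 : ∀ m n p, X n m p = -X m n p) (hX13 : ∀ m n p, X p n m = -X m n p) :
    ∑ m, ∑ n, ∑ p, Dform U V pr (X m n p) (e8 m) (e8 n) (e8 p)
      = ∑ m, ∑ n, ∑ p, Nform U V pr (X m n p) (e8 m) (e8 n) (e8 p)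
        - 3 * ∑ m, ∑ n, ∑ p, Nform U V pr (e8 m) (X m n p) (e8 n) (e8 p) := by
  have neg_second (W Y Z T : E8) : Nform U V pr W (-Y) Z T = -Nform U V pr W Y Z T := by
    simp only [Nform, inner_neg_right]; ring
  have swap_last (W Y Z T : E8) : Nform U V pr W Y T Z = -Nform U V pr W Y Z T := by
    simp only [Nform]; ring
  have third : ∑ m, ∑ n, ∑ p, Nform U V pr (e8 n) (X m n p) (e8 m) (e8 p)
      = -∑ m, ∑ n, ∑ p, Nform U V pr (e8 m) (X m n p) (e8 n) (e8 p) := by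
    rw [sum_comm]
    simp only [← sum_neg_distrib]
    refine sum_congr rfl fun m _ => sum_congr rfl fun n _ => sum_congr rfl fun p _ => ?_
    rw [hX12, neg_second]
  have fourth : ∑ m, ∑ n, ∑ p, Nform U V pr (e8 p) (X m n p) (e8 m) (e8 n)
      = ∑ m, ∑ n, ∑ p, Nform U V pr (e8 m) (X m n p) (e8 n) (e8 p) := by
    rw [← sum_sum_sum_swap_outer]
    refine sum_congr rfl fun m _ => sum_congr rfl fun n _ => sum_congr rfl fun p _ => ?_
    rw [hX13, neg_second, swap_last, neg_neg]
  simp only [Dform, sum_add_distrib, sum_sub_distrib, third, fourth]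
  ring

section Computation

variable {S : Submodule ℝ E8} {U V : E8}

lemma inner_P8_projPerp_reflection (x y : E8) :
    ⟪P8 U V (projPerp S (Sᗮ.reflection x)), y⟫ = -⟪x, projPerp S (P8 U V y)⟫ := by
  rw [projPerp_eq_starProjection, Submodule.starProjection_reflection, inner_P8_eq_neg_inner,
    Submodule.inner_starProjection_left_eq_right, projPerp_eq_starProjection]

lemma sum_inner_P8_projPerp_eq_neg_trace :
    ∑ m, ⟪P8 U V (e8 m), projPerp S (P8 U V (e8 m))⟫
      = -LinearMap.trace ℝ E8 (P8L U V ∘ₗ projPerpL S ∘ₗ P8L U V) := by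
  simp [trace_eq_sum_inner_e8, inner_P8_eq_neg_inner U V (e8 _)]

variable (S U V) in
lemma sum_Nform_reflection_first :
    ∑ m, ∑ n, ∑ p, Nform U V (projPerp S) (Sᗮ.reflection (P8 (e8 m) (e8 n) (e8 p)))
        (e8 m) (e8 n) (e8 p)
      = 6 * LinearMap.trace ℝ E8 (P8L U V ∘ₗ projPerpL S ∘ₗ P8L U V) := by
  set G : Fin 8 → Fin 8 → Fin 8 → ℝ := fun m n p =>
    (⟪U, e8 n⟫ * ⟪V, e8 p⟫ - ⟪U, e8 p⟫ * ⟪V, e8 n⟫) *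
      Phi8 (e8 m) (e8 n) (e8 p) (projPerp S (P8 U V (e8 m)))
  -- The three cyclic terms of `N` are `G` with rotated indices, since `Φ` is invariant under
  -- cyclic permutations of its first three arguments.
  have hN (m n p : Fin 8) : Nform U V (projPerp S) (Sᗮ.reflection (P8 (e8 m) (e8 n) (e8 p)))
      (e8 m) (e8 n) (e8 p) = -(G p m n + G m n p + G n p m) := by
    simp only [Nform, inner_P8_projPerp_reflection]
    simp only [inner_P8, G,
      ← Phi8_rotate (e8 p) (e8 m) (e8 n), Phi8_rotate (e8 m) (e8 n) (e8 p)]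
    ring
  have hG (m : Fin 8) :
      ∑ n, ∑ p, G m n p = 2 * ⟪P8 U V (e8 m), projPerp S (P8 U V (e8 m))⟫ := by
    rw [sum_sum_wedge_mul_Phi8, ← Phi8_rotate, inner_P8]
  calc _ = -(∑ m, ∑ n, ∑ p, G p m n + ∑ m, ∑ n, ∑ p, G m n p
            + ∑ m, ∑ n, ∑ p, G n p m) := by
        simp only [hN, sum_neg_distrib, sum_add_distrib]
    _ = -3 * ∑ m, ∑ n, ∑ p, G m n p := by
        rw [sum_sum_sum_rotate G, ← sum_sum_sum_rotate fun m n p => G n p m]; ring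
    _ = _ := by
        rw [sum_congr rfl fun m _ => hG m, ← mul_sum, sum_inner_P8_projPerp_eq_neg_trace]
        ring

lemma inner_reflection_P8 (u x y z : E8) :
    ⟪u, Sᗮ.reflection (P8 x y z)⟫ = Phi8 x y z (Sᗮ.reflection u) := by
  rw [← Submodule.inner_reflection_left_eq_right, real_inner_comm, inner_P8]

lemma inner_reflection_P8_of_mem {u : E8} (hu : u ∈ S) (x y z : E8) :
    ⟪u, Sᗮ.reflection (P8 x y z)⟫ = -Phi8 x y z u := by
  rw [← Submodule.inner_reflection_left_eq_right,
    Submodule.reflection_mem_subspace_orthogonal_precomplement_eq_neg hu, inner_neg_left,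
    real_inner_comm, inner_P8]

lemma sum_Nform_reflection_second_apply (hU : U ∈ S) (hV : V ∈ S) (a : E8) :
    ∑ n, ∑ p, Nform U V (projPerp S) a (Sᗮ.reflection (P8 a (e8 n) (e8 p))) (e8 n) (e8 p)
      = 4 * ⟪P8 U V (P8 U V (projPerp S a)), a⟫
        + 2 * ⟪P8 U V a, Sᗮ.reflection (P8 U V (projPerp S a))⟫ := by
  set w := P8 U V (projPerp S a)
  have hN (n p : Fin 8) :
      Nform U V (projPerp S) a (Sᗮ.reflection (P8 a (e8 n) (e8 p))) (e8 n) (e8 p)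
        = ⟪U, e8 n⟫ * ⟪w, e8 p⟫ * Phi8 a (e8 n) (e8 p) V
          - ⟪V, e8 n⟫ * ⟪w, e8 p⟫ * Phi8 a (e8 n) (e8 p) U
          + (⟪U, e8 n⟫ * ⟪V, e8 p⟫ - ⟪U, e8 p⟫ * ⟪V, e8 n⟫)
            * Phi8 a (e8 n) (e8 p) (Sᗮ.reflection w)
          + ⟪w, e8 n⟫ * ⟪V, e8 p⟫ * Phi8 a (e8 n) (e8 p) U
          - ⟪w, e8 n⟫ * ⟪U, e8 p⟫ * Phi8 a (e8 n) (e8 p) V := by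
    simp only [Nform, inner_reflection_P8_of_mem hU, inner_reflection_P8_of_mem hV,
      inner_reflection_P8]
    ring
  simp only [hN, sum_add_distrib, sum_sub_distrib, sum_sum_inner_mul_Phi8,
    sum_sum_wedge_mul_Phi8]
  -- the four values of `Φ` with `w` in the second or third slot are all `±Φ(U, V, w, a)`
  rw [Phi8_swap14 V U w a, Phi8_swap12 U V, Phi8_swap14 U V w a, Phi8_swap14 U w V a,
    Phi8_swap23 U V w a, Phi8_swap14 V w U a, Phi8_rotate U V w a, ← Phi8_rotate a U V,
    ← inner_P8, ← inner_P8]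
  ring

variable (S) in
lemma sum_Nform_reflection_second (hU : U ∈ S) (hV : V ∈ S) :
    ∑ m, ∑ n, ∑ p, Nform U V (projPerp S) (e8 m) (Sᗮ.reflection (P8 (e8 m) (e8 n) (e8 p)))
        (e8 n) (e8 p)
      = 6 * LinearMap.trace ℝ E8 (P8L U V ∘ₗ P8L U V ∘ₗ projPerpL S)
        - 4 * LinearMap.trace ℝ E8 (P8L U V ∘ₗ projPerpL S ∘ₗ P8L U V ∘ₗ projPerpL S) := by
  simp only [sum_Nform_reflection_second_apply hU hV, trace_eq_sum_inner_e8, mul_sum,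
    ← sum_sub_distrib]
  refine sum_congr rfl fun m _ => ?_
  simp only [Submodule.reflection_apply, two_nsmul, inner_add_right, inner_sub_right,
    ← projPerp_eq_starProjection]
  simp only [inner_P8_eq_neg_inner U V (e8 m), real_inner_comm (e8 m), LinearMap.comp_apply,
    P8L_apply, projPerpL_apply]
  ring

end Computation

lemma sum_norm_projPerp_P8_sq {S : Submodule ℝ E8} (U V : E8) {ι : Type*} [Fintype ι]
    {g : ι → E8} (hg : Orthonormal ℝ g) (hspan : Submodule.span ℝ (Set.range g) = S) :
    ∑ a, ‖projPerp S (P8 U V (g a))‖ ^ 2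
      = LinearMap.trace ℝ E8 (P8L U V ∘ₗ projPerpL S ∘ₗ P8L U V ∘ₗ projPerpL S)
        - LinearMap.trace ℝ E8 (P8L U V ∘ₗ projPerpL S ∘ₗ P8L U V) := by
  subst hspan
  set T := P8L U V ∘ₗ projPerpL (Submodule.span ℝ (Set.range g)) ∘ₗ P8L U V
  have hτ : (Submodule.span ℝ (Set.range g)).starProjection.toLinearMap
      = LinearMap.id - projPerpL (Submodule.span ℝ (Set.range g)) := by
    rw [projPerpL, Submodule.starProjection_orthogonal']
    ext x; simp
  calc _ = -∑ a, ⟪g a, T (g a)⟫ := by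
        simp only [projPerp_eq_starProjection, Submodule.norm_starProjection_sq,
          inner_P8_eq_neg_inner U V (g _), sum_neg_distrib, T, LinearMap.comp_apply, P8L_apply,
          projPerpL_apply]
    _ = _ := by
        rw [hg.sum_inner_apply_eq_trace, hτ, LinearMap.comp_sub, LinearMap.comp_id, map_sub]
        simp only [T, LinearMap.comp_assoc]
        ring

theorem key_computation_Cayley_general (S : Submodule ℝ E8)
    (U V : E8) (hU : U ∈ S) (hV : V ∈ S)
    (g : Fin 4 → E8) (hg : Orthonormal ℝ g)
    (hspan : Submodule.span ℝ (Set.range g) = S) :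
    (1/24 : ℝ) * ∑ m : Fin 8, ∑ n : Fin 8, ∑ p : Fin 8,
        Dform U V (projPerp S)
          (projPerp S (P8 (e8 m) (e8 n) (e8 p)) - projTan S (P8 (e8 m) (e8 n) (e8 p)))
          (e8 m) (e8 n) (e8 p)
      = (1/2 : ℝ) * ∑ a : Fin 4, ‖projPerp S (P8 U V (g a))‖ ^ 2 := by
  have hX12 (m n p : Fin 8) : Sᗮ.reflection (P8 (e8 n) (e8 m) (e8 p))
      = -Sᗮ.reflection (P8 (e8 m) (e8 n) (e8 p)) := by rw [P8_swap12, map_neg]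
  have hX13 (m n p : Fin 8) : Sᗮ.reflection (P8 (e8 p) (e8 n) (e8 m))
      = -Sᗮ.reflection (P8 (e8 m) (e8 n) (e8 p)) := by rw [P8_swap13, map_neg]
  have hcyc : LinearMap.trace ℝ E8 (P8L U V ∘ₗ P8L U V ∘ₗ projPerpL S)
      = LinearMap.trace ℝ E8 (P8L U V ∘ₗ projPerpL S ∘ₗ P8L U V) := by
    rw [LinearMap.trace_comp_comm', LinearMap.comp_assoc]
  simp only [projPerp_sub_projTan]
  rw [sum_Dform_eq_of_antisymm U V (projPerp S) hX12 hX13, sum_Nform_reflection_first,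
    sum_Nform_reflection_second S hU hV, sum_norm_projPerp_P8_sq U V hg hspan, hcyc]
  ring

/-- Key algebraic computation in the proof of Theorem 2.23. -/
theorem key_computation_Cayley (S : Submodule ℝ E8) (hS : Module.finrank ℝ S = 4)
    (U V : E8) (hU : U ∈ S) (hV : V ∈ S)
    (g : Fin 4 → E8) (hg : Orthonormal ℝ g) (hgS : ∀ a, g a ∈ S)
    (hspan : Submodule.span ℝ (Set.range g) = S) :
    (1/24 : ℝ) * ∑ m : Fin 8, ∑ n : Fin 8, ∑ p : Fin 8,
        Dform U V (projPerp S)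
          (projPerp S (P8 (e8 m) (e8 n) (e8 p)) - projTan S (P8 (e8 m) (e8 n) (e8 p)))
          (e8 m) (e8 n) (e8 p)
      = (1/2 : ℝ) * ∑ a : Fin 4, ‖projPerp S (P8 U V (g a))‖ ^ 2 :=
  key_computation_Cayley_general S U V hU hV g hg hspan
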